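/- Define Z₁ := X₊ + X₋ = (2ρ, 6p, 0), Z₂ := X₊ − X₋ = (0, 0, 2√3·√(p/ρ)), and X₀ = (1,0,0) on {ρ>0, p>0} (Euler system with κ = 3). Then [Z₁, Z₂] = 2Z₂, [X₀, Z₁] = 2X₀, and [X₀, Z₂] = −(1/(2ρ))Z₂; in particular the family {Z₁, Z₂, X₀} satisfies [V, W] ∈ span_{C^∞}{V, W} for each pair, i.e. it is in quasi-rectifiable form. -/

import Mathlib

set_option maxHeartbeats 1000000

noncomputable section

/-- Lie bracket of vector fields on `ℝ³`: `[X,Y] = (DY)X − (DX)Y`. -/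
def bracket (X Y : (Fin 3 → ℝ) → (Fin 3 → ℝ)) : (Fin 3 → ℝ) → (Fin 3 → ℝ) :=
  fun p => fderiv ℝ Y p (X p) - fderiv ℝ X p (Y p)

/-- `Z₁ := X₊ + X₋ = (2ρ, 6p, 0)` (Euler system, κ = 3). -/
def Z1 : (Fin 3 → ℝ) → (Fin 3 → ℝ) := fun v => ![2 * v 0, 6 * v 1, 0]

/-- `Z₂ := X₊ − X₋ = (0, 0, 2√3·√(p/ρ))`. -/
def Z2 : (Fin 3 → ℝ) → (Fin 3 → ℝ) :=
  fun v => ![0, 0, 2 * Real.sqrt 3 * Real.sqrt (v 1 / v 0)]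

/-- `X₀ = (1,0,0)`. -/
def Xzero : (Fin 3 → ℝ) → (Fin 3 → ℝ) := fun _ => ![1, 0, 0]

open ContinuousLinearMap in
def L1 : (Fin 3 → ℝ) →L[ℝ] (Fin 3 → ℝ) :=
  ContinuousLinearMap.pi ![(2:ℝ) • proj (0 : Fin 3), (6:ℝ) • proj (1 : Fin 3), 0]

lemma hZ1 (v : Fin 3 → ℝ) : HasFDerivAt Z1 L1 v := by
  apply hasFDerivAt_pi''
  intro i
  fin_cases i
  · have : HasFDerivAt (fun x : Fin 3 → ℝ => 2 * x 0)
        ((2:ℝ) • ContinuousLinearMap.proj (0 : Fin 3)) v :=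
      (hasFDerivAt_apply (𝕜 := ℝ) (F' := fun _ : Fin 3 => ℝ) 0 v).const_mul (2:ℝ)
    exact this.congr_fderiv (by simp [L1])
  · have : HasFDerivAt (fun x : Fin 3 → ℝ => 6 * x 1)
        ((6:ℝ) • ContinuousLinearMap.proj (1 : Fin 3)) v :=
      (hasFDerivAt_apply (𝕜 := ℝ) (F' := fun _ : Fin 3 => ℝ) 1 v).const_mul (6:ℝ)
    exact this.congr_fderiv (by simp [L1])
  · have : HasFDerivAt (fun _ : Fin 3 → ℝ => (0:ℝ))
        (0 : (Fin 3 → ℝ) →L[ℝ] ℝ) v := hasFDerivAt_const _ _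
    exact this.congr_fderiv (by simp [L1])

open ContinuousLinearMap in
def L2 (v : Fin 3 → ℝ) : (Fin 3 → ℝ) →L[ℝ] (Fin 3 → ℝ) :=
  ContinuousLinearMap.pi ![0, 0,
    (2 * Real.sqrt 3) • ((1 / (2 * Real.sqrt (v 1 * (v 0)⁻¹))) •
      (v 1 • ((-(v 0 ^ 2)⁻¹) • proj (0 : Fin 3)) + (v 0)⁻¹ • proj (1 : Fin 3)))]

lemma hZ2 (v : Fin 3 → ℝ) (h0 : 0 < v 0) (h1 : 0 < v 1) :
    HasFDerivAt Z2 (L2 v) v := by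
  apply hasFDerivAt_pi''
  intro i
  fin_cases i
  · have : HasFDerivAt (fun _ : Fin 3 → ℝ => (0:ℝ))
        (0 : (Fin 3 → ℝ) →L[ℝ] ℝ) v := hasFDerivAt_const _ _
    exact this.congr_fderiv (by simp [L2])
  · have : HasFDerivAt (fun _ : Fin 3 → ℝ => (0:ℝ))
        (0 : (Fin 3 → ℝ) →L[ℝ] ℝ) v := hasFDerivAt_const _ _
    exact this.congr_fderiv (by simp [L2])
  · have hinv' : HasFDerivAt ((fun y : ℝ => y⁻¹) ∘ (fun x : Fin 3 → ℝ => x 0))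
        ((-(v 0 ^ 2)⁻¹) • ContinuousLinearMap.proj (0 : Fin 3)) v :=
      HasDerivAt.comp_hasFDerivAt v (hasDerivAt_inv h0.ne') (hasFDerivAt_apply (𝕜 := ℝ) (F' := fun _ : Fin 3 => ℝ) 0 v)
    have hinv : HasFDerivAt (fun x : Fin 3 → ℝ => (x 0)⁻¹)
        ((-(v 0 ^ 2)⁻¹) • ContinuousLinearMap.proj (0 : Fin 3)) v := hinv'
    have hdiv : HasFDerivAt (fun x : Fin 3 → ℝ => x 1 * (x 0)⁻¹)
        (v 1 • ((-(v 0 ^ 2)⁻¹) • ContinuousLinearMap.proj (0 : Fin 3)) +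
          (v 0)⁻¹ • ContinuousLinearMap.proj (1 : Fin 3)) v :=
      (hasFDerivAt_apply (𝕜 := ℝ) (F' := fun _ : Fin 3 => ℝ) 1 v).mul hinv
    have hs : v 1 * (v 0)⁻¹ ≠ 0 := by positivity
    have := (hdiv.sqrt hs).const_mul (2 * Real.sqrt 3)
    exact this.congr_fderiv (by simp [L2, div_eq_mul_inv])

lemma hX0 (v : Fin 3 → ℝ) : HasFDerivAt Xzero (0 : (Fin 3 → ℝ) →L[ℝ] (Fin 3 → ℝ)) v :=
  hasFDerivAt_const _ _

/-- On `ρ > 0, p > 0`: `[Z₁,Z₂] = 2Z₂`, `[X₀,Z₁] = 2X₀`, `[X₀,Z₂] = −(1/(2ρ))Z₂`;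
in particular each pairwise bracket lies in the `C^∞` span of the pair, i.e. the family
`{Z₁, Z₂, X₀}` is in quasi-rectifiable form. -/
theorem euler_quasirectifiable_family :
    (∀ v : Fin 3 → ℝ, 0 < v 0 → 0 < v 1 →
      bracket Z1 Z2 v = (2 : ℝ) • Z2 v ∧
      bracket Xzero Z1 v = (2 : ℝ) • Xzero v ∧
      bracket Xzero Z2 v = (-(1 / (2 * v 0))) • Z2 v) ∧
    (∃ f g : (Fin 3 → ℝ) → ℝ, ∀ v : Fin 3 → ℝ, 0 < v 0 → 0 < v 1 →
      bracket Z1 Z2 v = f v • Z1 v + g v • Z2 v) ∧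
    (∃ f g : (Fin 3 → ℝ) → ℝ, ∀ v : Fin 3 → ℝ, 0 < v 0 → 0 < v 1 →
      bracket Xzero Z1 v = f v • Xzero v + g v • Z1 v) ∧
    (∃ f g : (Fin 3 → ℝ) → ℝ, ∀ v : Fin 3 → ℝ, 0 < v 0 → 0 < v 1 →
      bracket Xzero Z2 v = f v • Xzero v + g v • Z2 v) := by
  have key : ∀ v : Fin 3 → ℝ, 0 < v 0 → 0 < v 1 →
      bracket Z1 Z2 v = (2 : ℝ) • Z2 v ∧
      bracket Xzero Z1 v = (2 : ℝ) • Xzero v ∧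
      bracket Xzero Z2 v = (-(1 / (2 * v 0))) • Z2 v := by
    intro v h0 h1
    have e1 : fderiv ℝ Z1 v = L1 := (hZ1 v).fderiv
    have e2 : fderiv ℝ Z2 v = L2 v := (hZ2 v h0 h1).fderiv
    have e0 : fderiv ℝ Xzero v = 0 := (hX0 v).fderiv
    have hr : Real.sqrt (v 0) * Real.sqrt (v 0) = v 0 := Real.mul_self_sqrt h0.le
    have hp : Real.sqrt (v 1) * Real.sqrt (v 1) = v 1 := Real.mul_self_sqrt h1.le
    have hspos : 0 < Real.sqrt (v 1 * (v 0)⁻¹) := Real.sqrt_pos.2 (by positivity)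
    have hs : Real.sqrt (v 1 * (v 0)⁻¹) * Real.sqrt (v 1 * (v 0)⁻¹) * v 0 = v 1 := by
      rw [Real.mul_self_sqrt (by positivity)]
      field_simp
    have hρ := h0.ne'
    have hsne := hspos.ne'
    refine ⟨?_, ?_, ?_⟩
    · funext i
      simp only [bracket, e1, e2]
      fin_cases i
      · simp [L1, L2, Z1, Z2]
      · simp [L1, L2, Z1, Z2]
      · simp [L1, L2, Z1, Z2, smul_smul, div_eq_mul_inv]
        field_simp
        linear_combination (-4 : ℝ) * (by rw [div_eq_mul_inv]; exact hs :
          Real.sqrt (v 1 / v 0) * Real.sqrt (v 1 / v 0) * v 0 = v 1)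
    · funext i
      simp only [bracket, e1, e0]
      fin_cases i <;> simp [L1, Z1, Xzero]
    · funext i
      simp only [bracket, e2, e0]
      fin_cases i
      · simp [L2, Z2, Xzero]
      · simp [L2, Z2, Xzero]
      · simp [L2, Z2, Xzero, smul_smul, div_eq_mul_inv]
        field_simp
        linear_combination (-1 : ℝ) * (by rw [div_eq_mul_inv]; exact hs :
          Real.sqrt (v 1 / v 0) * Real.sqrt (v 1 / v 0) * v 0 = v 1)
  refine ⟨key, ⟨fun _ => 0, fun _ => 2, fun v h0 h1 => ?_⟩,
    ⟨fun _ => 2, fun _ => 0, fun v h0 h1 => ?_⟩,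
    ⟨fun _ => 0, fun v => -(1 / (2 * v 0)), fun v h0 h1 => ?_⟩⟩
  · simp [(key v h0 h1).1]
  · simp [(key v h0 h1).2.1]
  · simp [(key v h0 h1).2.2]
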